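/- arXiv:1406.3320 — 3 statements merged into one kernel-verified Lean document; each statement's English description precedes it below -/
import Mathlib

section
/- Let n be a positive integer, let u₀ > 0 and let u₁, …, u_n be real numbers, and define h(t) = u₀·sinh(t) + Σ_{j=1}^{n} u_j·t^{j−1} for real t, and set φ(t) = tanh(h(t)). Then the derivative of φ decays double exponentially: there exist constants C > 0, β > 0 and γ > 0 such that |φ'(x)| ≤ C·exp(−β·e^{γ|x|}) for all real x. -/
/-!
Since `tanh' = cosh⁻²` and `cosh y ≥ e^{|y|}/2`, the derivative of `tanh ∘ h` is at most
`4 |h'| e^{-2|h|}`. A polynomial is `O(e^{|x|/2})`, so `|h'(x)| = O(e^{|x|})`, while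
`2|h(x)| ≥ u₀ (e^{|x|} - 1) - O(e^{|x|/2}) ≥ (3/4) u₀ e^{|x|} - c`; one more quarter of the
double exponential absorbs the factor `e^{|x|}`, leaving `exp (-(u₀/2) e^{|x|})`.
-/

open Real Polynomial

namespace Real

theorem hasDerivAt_tanh (x : ℝ) : HasDerivAt tanh (cosh x ^ 2)⁻¹ x := by
  have h := (hasDerivAt_sinh x).div (hasDerivAt_cosh x) (cosh_pos x).ne'
  rwa [show cosh x * cosh x - sinh x * sinh x = 1 by rw [← cosh_sq_sub_sinh_sq x]; ring,
    one_div, show sinh / cosh = tanh from funext fun t => (tanh_eq_sinh_div_cosh t).symm] at h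

theorem cosh_le_exp_abs (x : ℝ) : cosh x ≤ exp |x| := by
  rw [← cosh_abs, cosh_eq]
  linarith [exp_le_exp.2 (neg_le_self (abs_nonneg x))]

theorem exp_abs_le_two_mul_cosh (x : ℝ) : exp |x| ≤ 2 * cosh x := by
  rw [← cosh_abs, cosh_eq]
  linarith [exp_pos (-|x|)]

theorem exp_abs_sub_one_le_two_mul_abs_sinh (x : ℝ) : exp |x| - 1 ≤ 2 * |sinh x| := by
  rw [abs_sinh, sinh_eq]
  linarith [exp_le_one_iff.2 (neg_nonpos.2 (abs_nonneg x))]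

theorem inv_cosh_sq_le (x : ℝ) : (cosh x ^ 2)⁻¹ ≤ 4 * exp (-(2 * |x|)) :=
  calc (cosh x ^ 2)⁻¹ ≤ ((exp |x| / 2) ^ 2)⁻¹ := by
        gcongr
        linarith [exp_abs_le_two_mul_cosh x]
    _ = 4 * exp (-(2 * |x|)) := by
        rw [exp_neg, mul_comm 2 |x|, exp_mul, rpow_two]
        field_simp
        norm_num

theorem abs_deriv_tanh_comp_le {h : ℝ → ℝ} {d x : ℝ} (hh : HasDerivAt h d x) :
    |deriv (fun t => tanh (h t)) x| ≤ 4 * |d| * exp (-(2 * |h x|)) := by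
  have hd : HasDerivAt (fun t => tanh (h t)) _ x := (hasDerivAt_tanh (h x)).comp x hh
  rw [hd.deriv, abs_mul, abs_of_pos (by positivity : 0 < (cosh (h x) ^ 2)⁻¹)]
  nlinarith [inv_cosh_sq_le (h x), abs_nonneg d]

end Real

theorem Polynomial.abs_eval_le_mul_exp (p : ℝ[X]) {ε : ℝ} (hε : 0 < ε) :
    ∃ K, 0 ≤ K ∧ ∀ x, |p.eval x| ≤ K * exp (ε * |x|) := by
  refine ⟨∑ i ∈ Finset.range (p.natDegree + 1), |p.coeff i| * (i.factorial / ε ^ i),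
    by positivity, fun x => ?_⟩
  rw [eval_eq_sum_range, Finset.sum_mul]
  refine (Finset.abs_sum_le_sum_abs _ _).trans (Finset.sum_le_sum fun i _ => ?_)
  rw [abs_mul, abs_pow, mul_assoc]
  gcongr
  -- `(ε|x|)^i / i!` is one term of the series of `e^{ε|x|}`.
  have h := pow_div_factorial_le_exp (ε * |x|) (by positivity) i
  rw [mul_pow, div_le_iff₀ (by positivity)] at h
  rw [div_mul_eq_mul_div, le_div_iff₀ (by positivity)]
  linarith

theorem abs_deriv_tanh_mul_sinh_add_le {u₀ K K' : ℝ} (hu₀ : 0 < u₀) (hK' : 0 ≤ K')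
    {g g' : ℝ → ℝ} (hg : ∀ x, HasDerivAt g (g' x) x)
    (hg_le : ∀ x, |g x| ≤ K * exp (|x| / 2)) (hg'_le : ∀ x, |g' x| ≤ K' * exp (|x| / 2)) :
    ∃ C, 0 < C ∧ ∀ x,
      |deriv (fun t => tanh (u₀ * sinh t + g t)) x| ≤ C * exp (-(u₀ / 2 * exp |x|)) := by
  set c := u₀ + 4 * K ^ 2 / u₀
  refine ⟨16 * (u₀ + K') / u₀ * exp (c - 1), by positivity, fun x => ?_⟩
  set s := exp |x|
  set r := exp (|x| / 2)
  have hrs : r ^ 2 = s := by rw [← exp_nat_mul]; congr 1; ring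
  have hr : r ≤ s := exp_le_exp.2 (by linarith [abs_nonneg x])
  have hderiv : |u₀ * cosh x + g' x| ≤ (u₀ + K') * s :=
    calc |u₀ * cosh x + g' x| ≤ |u₀ * cosh x| + |g' x| := abs_add_le _ _
      _ ≤ u₀ * s + K' * r := by
          rw [abs_of_pos (by positivity)]
          gcongr
          exacts [cosh_le_exp_abs x, hg'_le x]
      _ ≤ (u₀ + K') * s := by nlinarith
  -- AM-GM absorbs the `e^{|x|/2}` error into a quarter of the leading term `u₀ e^{|x|}`.
  have hamgm : 2 * K * r ≤ u₀ * s / 4 + 4 * K ^ 2 / u₀ := by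
    rw [← hrs, div_add_div _ _ (by norm_num) hu₀.ne', le_div_iff₀ (by positivity)]
    nlinarith [sq_nonneg (u₀ * r - 4 * K)]
  have hval : 3 / 4 * u₀ * s - c ≤ 2 * |u₀ * sinh x + g x| := by
    have h := abs_sub_abs_le_abs_add (u₀ * sinh x) (g x)
    rw [abs_mul, abs_of_pos hu₀] at h
    nlinarith [exp_abs_sub_one_le_two_mul_abs_sinh x, hg_le x]
  calc |deriv (fun t => tanh (u₀ * sinh t + g t)) x|
      ≤ 4 * |u₀ * cosh x + g' x| * exp (-(2 * |u₀ * sinh x + g x|)) :=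
        abs_deriv_tanh_comp_le (((hasDerivAt_sinh x).const_mul u₀).add (hg x))
    _ ≤ 4 * ((u₀ + K') * s) * exp (-(3 / 4 * u₀ * s - c)) := by gcongr
    _ = 16 * (u₀ + K') / u₀ * exp c * (u₀ * s / 4 * exp (-(u₀ * s / 4))) *
          exp (-(u₀ / 2 * s)) := by
        have hexp : exp (-(3 / 4 * u₀ * s - c)) =
            exp c * exp (-(u₀ * s / 4)) * exp (-(u₀ / 2 * s)) := by
          rw [← exp_add, ← exp_add]
          ring_nf
        rw [hexp]
        field_simp
        ring
    _ ≤ 16 * (u₀ + K') / u₀ * exp c * exp (-1) * exp (-(u₀ / 2 * s)) := by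
        gcongr
        exact mul_exp_neg_le_exp_neg_one _
    _ = 16 * (u₀ + K') / u₀ * exp (c - 1) * exp (-(u₀ / 2 * exp |x|)) := by
        rw [mul_assoc _ (exp c), ← exp_add, sub_eq_add_neg]

theorem deriv_tanh_polynomial_sinh_double_exponential_decay_general
    (n : ℕ) (u₀ : ℝ) (hu₀ : 0 < u₀) (u : ℕ → ℝ) :
    ∃ C β γ : ℝ, 0 < C ∧ 0 < β ∧ 0 < γ ∧ ∀ x : ℝ,
      |deriv (fun t : ℝ =>
          Real.tanh (u₀ * Real.sinh t + ∑ j ∈ Finset.Icc 1 n, u j * t ^ (j - 1))) x| ≤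
        C * Real.exp (-(β * Real.exp (γ * |x|))) := by
  set p : ℝ[X] := ∑ j ∈ Finset.Icc 1 n, C (u j) * X ^ (j - 1)
  have hp (t : ℝ) : ∑ j ∈ Finset.Icc 1 n, u j * t ^ (j - 1) = p.eval t := by
    simp [p, eval_finsetSum]
  obtain ⟨K, -, hp_le⟩ := p.abs_eval_le_mul_exp one_half_pos
  obtain ⟨K', hK', hp'_le⟩ := p.derivative.abs_eval_le_mul_exp one_half_pos
  simp only [one_div_mul_eq_div] at hp_le hp'_le
  obtain ⟨C, hC, hdecay⟩ := abs_deriv_tanh_mul_sinh_add_le hu₀ hK' p.hasDerivAt hp_le hp'_le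
  refine ⟨C, u₀ / 2, 1, hC, by positivity, one_pos, fun x => ?_⟩
  simpa only [hp, one_mul] using hdecay x

/-- For the polynomially adjusted `sinh` map
`h(t) = u₀ sinh t + Σ_{j=1}^{n} u_j t^{j−1}` with `u₀ > 0`, the derivative of
`φ = tanh ∘ h` decays double exponentially on the real line. -/
theorem deriv_tanh_polynomial_sinh_double_exponential_decay
    (n : ℕ) (hn : 0 < n) (u₀ : ℝ) (hu₀ : 0 < u₀) (u : ℕ → ℝ) :
    ∃ C β γ : ℝ, 0 < C ∧ 0 < β ∧ 0 < γ ∧ ∀ x : ℝ,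
      |deriv (fun t : ℝ =>
          Real.tanh (u₀ * Real.sinh t + ∑ j ∈ Finset.Icc 1 n, u j * t ^ (j - 1))) x| ≤
        C * Real.exp (-(β * Real.exp (γ * |x|))) :=
  deriv_tanh_polynomial_sinh_double_exponential_decay_general n u₀ hu₀ u
end

section
/- Let n be a positive integer, let u₀ > 0 and let u₁, …, u_n be real numbers, and define h(t) = u₀·sinh(t) + Σ_{j=1}^{n} u_j·t^{j−1} for real t, and set φ(t) = tanh(h(t)). Then φ has double exponential decay toward the endpoints ±1: there exist constants C > 0, β > 0, γ > 0 and T > 0 such that 1 − |φ(x)| ≤ C·exp(−β·e^{γ|x|}) for all real x with |x| ≥ T. -/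
/-!
Since `1 - |tanh y| ≤ 2 e^{-2|y|}`, it suffices that `|h(x)|` grows like a multiple of `e^{|x|}`.
This holds because `|sinh x| ≥ (e^{|x|} - 1) / 2` while the polynomial part of `h` is `o(e^{|x|})`.
-/

open Real Filter Asymptotics

lemma Real.abs_tanh (y : ℝ) : |tanh y| = tanh |y| := by
  rw [tanh_eq_sinh_div_cosh, tanh_eq_sinh_div_cosh, abs_div, abs_sinh,
    abs_of_pos (cosh_pos y), cosh_abs]

lemma Real.one_sub_tanh_le (t : ℝ) : 1 - tanh t ≤ 2 * exp (-(2 * t)) := by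
  have hcosh : exp t / 2 ≤ cosh t := by
    rw [cosh_eq]; linarith [exp_pos (-t)]
  calc 1 - tanh t = exp (-t) / cosh t := by
        rw [tanh_eq_sinh_div_cosh, sinh_eq, cosh_eq]; field_simp; ring
    _ ≤ exp (-t) / (exp t / 2) := by gcongr
    _ = 2 * exp (-(2 * t)) := by
        rw [show -(2 * t) = -t + -t by ring, exp_add, exp_neg t]; field_simp

lemma Real.one_sub_abs_tanh_le (y : ℝ) : 1 - |tanh y| ≤ 2 * exp (-(2 * |y|)) := by
  rw [abs_tanh]; exact one_sub_tanh_le |y|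

lemma Real.sub_one_div_two_le_sinh_abs (x : ℝ) : (exp |x| - 1) / 2 ≤ sinh |x| := by
  rw [sinh_eq]
  have : exp (-|x|) ≤ 1 := exp_le_one_iff.mpr (neg_nonpos.mpr (abs_nonneg x))
  linarith

lemma abs_sum_mul_pow_le {ι : Type*} (s : Finset ι) (c : ι → ℝ) (k : ι → ℕ) (x : ℝ) :
    |∑ i ∈ s, c i * x ^ k i| ≤ ∑ i ∈ s, |c i| * |x| ^ k i :=
  (Finset.abs_sum_le_sum_abs _ _).trans_eq (by simp only [abs_mul, abs_pow])

lemma isLittleO_sum_mul_pow_exp_atTop {ι : Type*} (s : Finset ι) (c : ι → ℝ) (k : ι → ℕ) :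
    (fun r : ℝ => ∑ i ∈ s, c i * r ^ k i) =o[atTop] exp :=
  IsLittleO.fun_sum fun i _ => isLittleO_pow_exp_atTop.const_mul_left (c i)

lemma exists_exp_le_abs_mul_sinh_add {u₀ : ℝ} (hu₀ : 0 < u₀) {p q : ℝ → ℝ}
    (hpq : ∀ x, |p x| ≤ q |x|) (hq : q =o[atTop] exp) :
    ∃ T > 0, ∀ x : ℝ, T ≤ |x| → u₀ / 4 * exp |x| ≤ |u₀ * sinh x + p x| := by
  have hsmall : (fun r => q r + u₀ / 2) =o[atTop] exp :=
    hq.add (by simpa using (isLittleO_one_exp_comp.mpr tendsto_id).const_mul_left (u₀ / 2))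
  obtain ⟨T, hT⟩ := eventually_atTop.mp (hsmall.bound (by positivity : 0 < u₀ / 4))
  refine ⟨max T 1, by positivity, fun x hx => ?_⟩
  have hbound := hT |x| (le_of_max_le_left hx)
  rw [Real.norm_eq_abs, Real.norm_eq_abs, abs_of_pos (exp_pos _)] at hbound
  have hsinh : u₀ * ((exp |x| - 1) / 2) ≤ |u₀ * sinh x| := by
    rw [abs_mul, abs_of_pos hu₀, abs_sinh]
    exact mul_le_mul_of_nonneg_left (sub_one_div_two_le_sinh_abs x) hu₀.le
  have hp : |p x| ≤ q |x| := hpq x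
  have htri : |u₀ * sinh x| - |p x| ≤ |u₀ * sinh x + p x| := by
    simpa using abs_sub_abs_le_abs_sub (u₀ * sinh x) (-p x)
  linarith [le_abs_self (q |x| + u₀ / 2)]

theorem tanh_polynomial_sinh_double_exponential_endpoint_decay_general
    (n : ℕ) (u₀ : ℝ) (hu₀ : 0 < u₀) (u : ℕ → ℝ) :
    ∃ C β γ T : ℝ, 0 < C ∧ 0 < β ∧ 0 < γ ∧ 0 < T ∧ ∀ x : ℝ, T ≤ |x| →
      1 - |Real.tanh (u₀ * Real.sinh x + ∑ j ∈ Finset.Icc 1 n, u j * x ^ (j - 1))| ≤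
        C * Real.exp (-(β * Real.exp (γ * |x|))) := by
  obtain ⟨T, hT, hgrowth⟩ := exists_exp_le_abs_mul_sinh_add hu₀
    (abs_sum_mul_pow_le (Finset.Icc 1 n) u (· - 1))
    (isLittleO_sum_mul_pow_exp_atTop (Finset.Icc 1 n) (fun j => |u j|) (· - 1))
  refine ⟨2, u₀ / 2, 1, T, two_pos, half_pos hu₀, one_pos, hT, fun x hx => ?_⟩
  refine (one_sub_abs_tanh_le _).trans ?_
  gcongr 2 * exp (-?_)
  rw [one_mul]
  linarith [hgrowth x hx]

/-- For the polynomially adjusted `sinh` map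
`h(t) = u₀ sinh t + Σ_{j=1}^{n} u_j t^{j−1}` with `u₀ > 0`, the transformation
`φ = tanh ∘ h` approaches the endpoints `±1` double exponentially. -/
theorem tanh_polynomial_sinh_double_exponential_endpoint_decay
    (n : ℕ) (hn : 0 < n) (u₀ : ℝ) (hu₀ : 0 < u₀) (u : ℕ → ℝ) :
    ∃ C β γ T : ℝ, 0 < C ∧ 0 < β ∧ 0 < γ ∧ 0 < T ∧ ∀ x : ℝ, T ≤ |x| →
      1 - |Real.tanh (u₀ * Real.sinh x + ∑ j ∈ Finset.Icc 1 n, u j * x ^ (j - 1))| ≤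
        C * Real.exp (-(β * Real.exp (γ * |x|))) :=
  tanh_polynomial_sinh_double_exponential_endpoint_decay_general n u₀ hu₀ u
end

section
/- For every positive integer m and every real κ > 0, the m-dimensional box expectation admits the one-dimensional representation ∫_{[0,1]^m} exp(−κ·(r₁² + ⋯ + r_m²)^{1/2}) dr₁⋯dr_m = (1/2) · (π/(2κ))^{(m−1)/2} · ∫₀^∞ t^{(m−1)/2} · e^{−κt/2} · erf((κ/(2t))^{1/2})^m dt. -/
/-!
The starting point is the subordination identity
`∫₀^∞ t^{-1/2} e^{-(p t + q/t)} dt = √(π/p) e^{-2√(pq)}`, which reduces, after `t = x²` and a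
rescaling, to `∫₀^∞ e^{-(x - b/x)²} dx = √π/2`. For the latter, the involution `x ↦ b/x` preserves
the integrand and multiplies it by `b/x²`, so the integral is half of
`∫₀^∞ (1 + b/x²) e^{-(x - b/x)²} dx`, which the substitution `w = x - b/x` turns into the full
Gaussian integral.

With `p = κ/2` and `q = κ|r|²/2` this writes `e^{-κ|r|}` as a superposition of Gaussians
`e^{-κ|r|²/(2t)}`. By Fubini the box integral of each Gaussian factorises into `m` copies of
`∫₀¹ e^{-c²s²} ds = √π erf(c) / (2c)` with `c = √(κ/(2t))`, leaving a single integral over `t`.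
-/

open Real MeasureTheory

noncomputable def erf (u : ℝ) : ℝ :=
  (2 / Real.sqrt π) * ∫ s in (0:ℝ)..u, Real.exp (-(s ^ 2))

open Set

section Glasser

variable {b : ℝ}

lemma hasDerivAt_sub_const_div (b : ℝ) {x : ℝ} (hx : x ≠ 0) :
    HasDerivAt (fun x => x - b / x) (1 + b / x ^ 2) x := by
  simpa only [← div_eq_mul_inv, mul_neg, sub_neg_eq_add] using
    (hasDerivAt_id' x).fun_sub ((hasDerivAt_inv hx).const_mul b)

lemma hasDerivAt_const_div (b : ℝ) {x : ℝ} (hx : x ≠ 0) :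
    HasDerivAt (fun x => b / x) (-(b / x ^ 2)) x := by
  simpa only [div_eq_mul_inv, mul_neg] using (hasDerivAt_inv hx).const_mul b

lemma strictMonoOn_sub_const_div (hb : 0 ≤ b) : StrictMonoOn (fun x => x - b / x) (Ioi 0) := by
  intro x hx y _ hxy
  have : b / y ≤ b / x := div_le_div_of_nonneg_left hb hx hxy.le
  dsimp only
  linarith

lemma image_sub_const_div_Ioi (hb : 0 < b) : (fun x => x - b / x) '' Ioi 0 = univ := by
  refine eq_univ_of_forall fun w => ?_
  have hs : √(w ^ 2 + 4 * b) ^ 2 = w ^ 2 + 4 * b := sq_sqrt (by positivity)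
  have hw : |w| < √(w ^ 2 + 4 * b) := by
    rw [← sqrt_sq_eq_abs]; exact sqrt_lt_sqrt (sq_nonneg w) (by linarith)
  have hpos : 0 < (w + √(w ^ 2 + 4 * b)) / 2 := by linarith [neg_abs_le w]
  refine ⟨_, hpos, ?_⟩
  have : w + √(w ^ 2 + 4 * b) ≠ 0 := by linarith
  field_simp
  linear_combination hs

lemma image_const_div_Ioi (hb : 0 < b) : (fun x => b / x) '' Ioi 0 = Ioi 0 := by
  refine Subset.antisymm ?_ fun y hy => ⟨b / y, div_pos hb hy, div_div_cancel₀ hb.ne'⟩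
  rintro _ ⟨x, hx, rfl⟩
  exact div_pos hb hx

lemma injOn_const_div (hb : 0 < b) : InjOn (fun x => b / x) (Ioi 0) := by
  intro x _ y _ hxy
  simpa only [div_eq_mul_inv, mul_eq_mul_left_iff, inv_inj, hb.ne', or_false] using hxy

lemma integral_div_sq_mul_comp_const_div (hb : 0 < b) (f : ℝ → ℝ) :
    ∫ x in Ioi 0, b / x ^ 2 * f (b / x) = ∫ x in Ioi 0, f x := by
  have h := integral_image_eq_integral_abs_deriv_smul measurableSet_Ioi
    (fun x hx => (hasDerivAt_const_div b (ne_of_gt hx)).hasDerivWithinAt) (injOn_const_div hb) f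
  rw [image_const_div_Ioi hb] at h
  rw [h]
  refine setIntegral_congr_fun measurableSet_Ioi fun x (hx : 0 < x) => ?_
  rw [abs_neg, abs_of_pos (by positivity), smul_eq_mul]

lemma integrableOn_one_add_div_sq_mul_exp_neg_sub_div_sq (hb : 0 < b) :
    IntegrableOn (fun x => (1 + b / x ^ 2) * exp (-(x - b / x) ^ 2)) (Ioi 0) := by
  have h := integrableOn_image_iff_integrableOn_abs_deriv_smul measurableSet_Ioi
    (fun x hx => (hasDerivAt_sub_const_div b (ne_of_gt hx)).hasDerivWithinAt)
    (strictMonoOn_sub_const_div hb.le).injOn (fun w => exp (-w ^ 2))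
  rw [image_sub_const_div_Ioi hb, integrableOn_univ] at h
  refine (h.mp ?_).congr_fun ?_ measurableSet_Ioi
  · simpa using integrable_exp_neg_mul_sq one_pos
  · intro x (hx : 0 < x)
    dsimp only
    rw [abs_of_pos (by positivity), smul_eq_mul]

lemma integral_one_add_div_sq_mul_exp_neg_sub_div_sq (hb : 0 < b) :
    ∫ x in Ioi 0, (1 + b / x ^ 2) * exp (-(x - b / x) ^ 2) = √π := by
  have h := integral_image_eq_integral_abs_deriv_smul measurableSet_Ioi
    (fun x hx => (hasDerivAt_sub_const_div b (ne_of_gt hx)).hasDerivWithinAt)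
    (strictMonoOn_sub_const_div hb.le).injOn (fun w => exp (-w ^ 2))
  rw [image_sub_const_div_Ioi hb, Measure.restrict_univ, (by simpa using integral_gaussian 1 :
    ∫ w, exp (-w ^ 2) = √π)] at h
  rw [h]
  refine setIntegral_congr_fun measurableSet_Ioi fun x (hx : 0 < x) => ?_
  rw [abs_of_pos (by positivity), smul_eq_mul]

lemma integral_exp_neg_sub_div_sq (hb : 0 < b) :
    ∫ x in Ioi 0, exp (-(x - b / x) ^ 2) = √π / 2 := by
  set g : ℝ → ℝ := fun x => exp (-(x - b / x) ^ 2)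
  have hg_comp_div : ∀ x ∈ Ioi (0 : ℝ), g (b / x) = g x := fun x (hx : 0 < x) => by
    simp only [g, div_div_cancel₀ hb.ne', ← neg_sub (b / x), neg_sq]
  have hmajorant := integrableOn_one_add_div_sq_mul_exp_neg_sub_div_sq hb
  have hg : IntegrableOn g (Ioi 0) := by
    refine hmajorant.mono' (by fun_prop) (ae_restrict_of_forall_mem measurableSet_Ioi ?_)
    intro x (hx : 0 < x)
    rw [norm_of_nonneg (exp_pos _).le]
    exact le_mul_of_one_le_left (exp_pos _).le (le_add_of_nonneg_right (by positivity))
  have hg' : IntegrableOn (fun x => b / x ^ 2 * g x) (Ioi 0) :=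
    (hmajorant.sub hg).congr_fun (fun x _ => by simp only [Pi.sub_apply, g]; ring) measurableSet_Ioi
  have hsymm : ∫ x in Ioi 0, b / x ^ 2 * g x = ∫ x in Ioi 0, g x := by
    rw [← integral_div_sq_mul_comp_const_div hb g]
    exact setIntegral_congr_fun measurableSet_Ioi fun x hx => by rw [hg_comp_div x hx]
  have h := integral_one_add_div_sq_mul_exp_neg_sub_div_sq hb
  simp_rw [add_mul, one_mul] at h
  rw [integral_add hg hg', hsymm] at h
  linarith

theorem integral_exp_neg_sq_add_sq_div_sq (hb : 0 ≤ b) :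
    ∫ x in Ioi 0, exp (-(x ^ 2 + b ^ 2 / x ^ 2)) = √π / 2 * exp (-(2 * b)) := by
  rcases hb.eq_or_lt with rfl | hb
  · simpa using integral_gaussian_Ioi 1
  rw [← integral_exp_neg_sub_div_sq hb, ← integral_mul_const]
  refine setIntegral_congr_fun measurableSet_Ioi fun x (hx : 0 < x) => ?_
  rw [← exp_add]
  congr 1
  field_simp
  ring

end Glasser

theorem integral_exp_neg_mul_sq_add_div_sq {p q : ℝ} (hp : 0 < p) (hq : 0 ≤ q) :
    ∫ x in Ioi 0, exp (-(p * x ^ 2 + q / x ^ 2)) = √(π / p) / 2 * exp (-(2 * √(p * q))) := by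
  have h := integral_comp_mul_left_Ioi (fun x => exp (-(x ^ 2 + √(p * q) ^ 2 / x ^ 2))) 0
    (sqrt_pos.mpr hp)
  rw [mul_zero, integral_exp_neg_sq_add_sq_div_sq (sqrt_nonneg _), smul_eq_mul] at h
  convert h using 1
  · refine setIntegral_congr_fun measurableSet_Ioi fun x (hx : 0 < x) => ?_
    rw [mul_pow, sq_sqrt hp.le, sq_sqrt (by positivity)]
    field_simp
  · rw [sqrt_div' _ hp.le]
    ring

theorem integral_rpow_neg_half_mul_exp_neg_mul_add_div {p q : ℝ} (hp : 0 < p) (hq : 0 ≤ q) :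
    ∫ t in Ioi 0, t ^ (-(1 / 2) : ℝ) * exp (-(p * t + q / t)) =
      √(π / p) * exp (-(2 * √(p * q))) := by
  rw [← integral_comp_rpow_Ioi_of_pos two_pos, ← mul_div_cancel₀ (√(π / p)) two_ne_zero,
    mul_assoc, ← integral_exp_neg_mul_sq_add_div_sq hp hq, ← integral_const_mul]
  refine setIntegral_congr_fun measurableSet_Ioi fun x (hx : 0 < x) => ?_
  have hx2 : x ^ (2 : ℝ) = x ^ 2 := rpow_two x
  have hx_inv : (x ^ 2) ^ (-(1 / 2) : ℝ) = x⁻¹ := by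
    rw [← hx2, ← rpow_mul hx.le]
    norm_num [rpow_neg_one]
  rw [hx2, hx_inv, smul_eq_mul, show (2 : ℝ) - 1 = 1 by norm_num, rpow_one]
  field_simp

lemma integral_exp_neg_mul_sq_eq_erf {c : ℝ} (hc : c ≠ 0) :
    ∫ s in (0 : ℝ)..1, exp (-(c * s) ^ 2) = √π / 2 * erf c / c := by
  rw [intervalIntegral.integral_comp_mul_left (fun x => exp (-x ^ 2)) hc, mul_zero, mul_one,
    erf, smul_eq_mul]
  field_simp

lemma setIntegral_univ_pi_prod_eq_pow {ι E : Type*} [Fintype ι] [MeasureSpace E]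
    [SigmaFinite (volume : Measure E)] (s : Set E) (f : E → ℝ) :
    ∫ r in univ.pi (fun _ : ι => s), ∏ i, f (r i) = (∫ x in s, f x) ^ Fintype.card ι := by
  rw [volume_pi, Measure.restrict_pi_pi, integral_fintype_prod_eq_pow]

lemma exp_neg_mul_sqrt_eq_integral {κ ρ : ℝ} (hκ : 0 < κ) (hρ : 0 ≤ ρ) :
    exp (-κ * √ρ) = (2 * √(π / (2 * κ)))⁻¹ *
      ∫ t in Ioi 0, t ^ (-(1 / 2) : ℝ) * exp (-κ * t / 2) * exp (-(κ / (2 * t) * ρ)) := by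
  have h := integral_rpow_neg_half_mul_exp_neg_mul_add_div (half_pos hκ)
    (by positivity : 0 ≤ κ * ρ / 2)
  have hconst : √(π / (κ / 2)) = 2 * √(π / (2 * κ)) := by
    rw [← sqrt_mul_self zero_le_two, ← sqrt_mul (by positivity)]
    congr 1
    field_simp
    ring
  have hexponent : 2 * √(κ / 2 * (κ * ρ / 2)) = κ * √ρ := by
    rw [show κ / 2 * (κ * ρ / 2) = (κ / 2) ^ 2 * ρ by ring, sqrt_mul (by positivity),
      sqrt_sq (by positivity)]
    ring
  rw [hconst, hexponent] at h
  have hintegrand : ∫ t in Ioi 0, t ^ (-(1 / 2) : ℝ) * exp (-κ * t / 2) * exp (-(κ / (2 * t) * ρ))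
      = ∫ t in Ioi 0, t ^ (-(1 / 2) : ℝ) * exp (-(κ / 2 * t + κ * ρ / 2 / t)) := by
    refine setIntegral_congr_fun measurableSet_Ioi fun t (ht : 0 < t) => ?_
    rw [mul_assoc, ← exp_add]
    congr 2
    field_simp
    ring
  rw [hintegrand, h, inv_mul_cancel_left₀ (by positivity), neg_mul]

lemma integrable_rpow_neg_half_mul_exp_mul_exp {X : Type*} [MeasurableSpace X] (μ : Measure X)
    [IsFiniteMeasure μ] {φ : X → ℝ} (hφ : Measurable φ) (hφ_nonneg : ∀ x, 0 ≤ φ x) {κ : ℝ}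
    (hκ : 0 < κ) :
    Integrable (fun z : X × ℝ => z.2 ^ (-(1 / 2) : ℝ) * exp (-κ * z.2 / 2) *
      exp (-(κ / (2 * z.2) * φ z.1))) (μ.prod (volume.restrict (Ioi 0))) := by
  have hmajorant : IntegrableOn (fun t : ℝ => t ^ (-(1 / 2) : ℝ) * exp (-κ * t / 2)) (Ioi 0) := by
    refine (integrableOn_rpow_mul_exp_neg_mul_rpow (by norm_num : (-1 : ℝ) < -(1 / 2)) one_pos
      (half_pos hκ)).congr_fun (fun t _ => ?_) measurableSet_Ioi
    simp only [rpow_one]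
    ring_nf
  refine (hmajorant.comp_snd μ).mono' (by fun_prop) ?_
  filter_upwards [Measure.quasiMeasurePreserving_snd.ae (ae_restrict_mem measurableSet_Ioi)]
    with z (hz : 0 < z.2)
  have hφz := hφ_nonneg z.1
  rw [norm_of_nonneg (by positivity)]
  exact mul_le_of_le_one_right (by positivity) (exp_le_one_iff.mpr (neg_nonpos.mpr (by positivity)))

theorem integral_exp_neg_mul_sqrt {X : Type*} [MeasurableSpace X] (μ : Measure X)
    [IsFiniteMeasure μ] {φ : X → ℝ} (hφ : Measurable φ) (hφ_nonneg : ∀ x, 0 ≤ φ x) {κ : ℝ}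
    (hκ : 0 < κ) :
    ∫ x, exp (-κ * √(φ x)) ∂μ = (2 * √(π / (2 * κ)))⁻¹ * ∫ t in Ioi 0,
      t ^ (-(1 / 2) : ℝ) * exp (-κ * t / 2) * ∫ x, exp (-(κ / (2 * t) * φ x)) ∂μ := by
  simp_rw [exp_neg_mul_sqrt_eq_integral hκ (hφ_nonneg _), integral_const_mul]
  rw [integral_integral_swap (integrable_rpow_neg_half_mul_exp_mul_exp μ hφ hφ_nonneg hκ)]
  simp_rw [integral_const_mul]

lemma setIntegral_Icc_pi_exp_neg_mul_sum_sq {ι : Type*} [Fintype ι] {a : ℝ} (ha : 0 < a) :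
    ∫ r in univ.pi (fun _ : ι => Icc (0 : ℝ) 1), exp (-(a * ∑ i, r i ^ 2)) =
      (√π / 2 * erf √a / √a) ^ Fintype.card ι := by
  have hprod : ∀ r : ι → ℝ, exp (-(a * ∑ i, r i ^ 2)) = ∏ i, exp (-(√a * r i) ^ 2) := fun r => by
    simp_rw [← exp_sum, mul_pow, sq_sqrt ha.le, Finset.sum_neg_distrib, Finset.mul_sum]
  simp_rw [hprod]
  refine (setIntegral_univ_pi_prod_eq_pow _ fun s => exp (-(√a * s) ^ 2)).trans ?_
  rw [integral_Icc_eq_integral_Ioc,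
    ← intervalIntegral.integral_of_le zero_le_one,
    integral_exp_neg_mul_sq_eq_erf (sqrt_pos.mpr ha).ne']

lemma sqrt_pow_div_sqrt {x : ℝ} (hx : 0 < x) (m : ℕ) : √x ^ m / √x = x ^ (((m : ℝ) - 1) / 2) := by
  rw [sqrt_eq_rpow, ← rpow_natCast, ← rpow_mul hx.le, ← rpow_sub hx]
  ring_nf

theorem box_expectation_one_dimensional_general (m : ℕ) (κ : ℝ) (hκ : 0 < κ) :
    (∫ r in Set.univ.pi (fun _ : Fin m => Set.Icc (0:ℝ) 1),
        Real.exp (-κ * Real.sqrt (∑ i, r i ^ 2))) =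
      (1 / 2) * (π / (2 * κ)) ^ (((m : ℝ) - 1) / 2) *
        ∫ t in Set.Ioi (0:ℝ),
          t ^ (((m : ℝ) - 1) / 2) * Real.exp (-κ * t / 2) *
            erf (Real.sqrt (κ / (2 * t))) ^ m := by
  set B := univ.pi fun _ : Fin m => Icc (0 : ℝ) 1
  have : IsFiniteMeasure (volume.restrict B) := isFiniteMeasure_restrict.mpr
    (isCompact_univ_pi fun _ => isCompact_Icc).measure_lt_top.ne
  rw [integral_exp_neg_mul_sqrt _ (by fun_prop) (fun r => by positivity) hκ,
    ← integral_const_mul, ← integral_const_mul]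
  refine setIntegral_congr_fun measurableSet_Ioi fun t (ht : 0 < t) => ?_
  have ha : 0 < κ / (2 * t) := by positivity
  rw [setIntegral_Icc_pi_exp_neg_mul_sum_sq ha, Fintype.card_fin]
  have hscale : √π / 2 / √(κ / (2 * t)) = √(π / (2 * κ)) * √t := by
    rw [← sqrt_mul (by positivity), eq_comm, sqrt_eq_iff_eq_sq (by positivity) (by positivity),
      div_pow, sq_sqrt ha.le, div_pow, sq_sqrt pi_pos.le]
    field_simp
  have ht_rpow : t ^ (-(1 / 2) : ℝ) = (√t)⁻¹ := by rw [rpow_neg ht.le, sqrt_eq_rpow]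
  rw [mul_div_right_comm (√π / 2), hscale, ht_rpow, mul_pow, mul_pow, ← sqrt_pow_div_sqrt ht,
    ← sqrt_pow_div_sqrt (by positivity : 0 < π / (2 * κ))]
  field_simp

/-- One-dimensional representation of the box expectation:
`⟨e^{−κ|r⃗|}⟩_{r⃗∈[0,1]^m} = (1/2)(π/(2κ))^{(m−1)/2} ∫₀^∞ t^{(m−1)/2} e^{−κt/2} erf(√(κ/(2t)))^m dt`. -/
theorem box_expectation_one_dimensional (m : ℕ) (hm : 0 < m) (κ : ℝ) (hκ : 0 < κ) :
    (∫ r in Set.univ.pi (fun _ : Fin m => Set.Icc (0:ℝ) 1),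
        Real.exp (-κ * Real.sqrt (∑ i, r i ^ 2))) =
      (1 / 2) * (π / (2 * κ)) ^ (((m : ℝ) - 1) / 2) *
        ∫ t in Set.Ioi (0:ℝ),
          t ^ (((m : ℝ) - 1) / 2) * Real.exp (-κ * t / 2) *
            erf (Real.sqrt (κ / (2 * t))) ^ m :=
  box_expectation_one_dimensional_general m κ hκ
end
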